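/- arXiv:2105.11562 — 3 statements merged into one kernel-verified Lean document; each statement's English description precedes it below -/
import Mathlib

section
/- Let B be an n × n complex matrix, T_E, T_I > 0, and let A be the 2n × 2n block matrix with blocks A = [[−(1/T_E) I_n, B], [(1/T_E) I_n, −(1/T_I) I_n]]. Then a complex number μ is an eigenvalue of A if and only if T_E (μ + 1/T_E)(μ + 1/T_I) is an eigenvalue of B. -/
namespace Matrix

variable {n K : Type*} [Fintype n] [DecidableEq n] [Field K]

theorem mem_spectrum_iff_exists_mulVec_eq_smul (M : Matrix n n K) (μ : K) :
    μ ∈ spectrum K M ↔ ∃ v ≠ 0, M *ᵥ v = μ • v := by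
  rw [spectrum.mem_iff, isUnit_iff_isUnit_det, isUnit_iff_ne_zero, not_not,
    ← exists_mulVec_eq_zero_iff, Algebra.algebraMap_eq_smul_one]
  simp only [sub_mulVec, smul_mulVec, one_mulVec, sub_eq_zero, eq_comm]

/-- The second block row of an eigenvector equation for `μ` forces `c • x = (μ - d) • y`,
so `x` is determined by `y`, and the first row then reads `B y = ((μ - a) (μ - d) / c) • y`. -/
theorem mem_spectrum_fromBlocks_smul_one_iff (a c d : K) (hc : c ≠ 0) (B : Matrix n n K)
    (μ : K) :
    μ ∈ spectrum K (fromBlocks (a • 1 : Matrix n n K) B (c • 1 : Matrix n n K) (d • 1)) ↔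
      (μ - a) * (μ - d) / c ∈ spectrum K B := by
  simp only [mem_spectrum_iff_exists_mulVec_eq_smul, fromBlocks_mulVec, smul_mulVec, one_mulVec]
  constructor
  · rintro ⟨v, hv, hAv⟩
    set x := v ∘ Sum.inl
    set y := v ∘ Sum.inr
    have hx : a • x + B *ᵥ y = μ • x := funext fun i => congrFun hAv (.inl i)
    have hy : c • x + d • y = μ • y := funext fun i => congrFun hAv (.inr i)
    have hxy : x = ((μ - d) / c) • y := by
      rw [div_eq_inv_mul, mul_smul, sub_smul, ← hy, add_sub_cancel_right, inv_smul_smul₀ hc]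
    refine ⟨y, fun h0 => hv ?_, ?_⟩
    · have : x = 0 := by rw [hxy, h0, smul_zero]
      ext (i | i)
      · exact congrFun this i
      · exact congrFun h0 i
    · rw [mul_div_assoc, mul_smul, ← hxy, sub_smul, ← hx]
      module
  · rintro ⟨y, hy, hBy⟩
    refine ⟨Sum.elim (((μ - d) / c) • y) y, fun h0 => hy ?_, ?_⟩
    · simpa using congrArg (· ∘ Sum.inr) h0
    · simp only [Sum.elim_comp_inl, Sum.elim_comp_inr, hBy]
      ext (i | i) <;> simp only [Sum.elim_inl, Sum.elim_inr, Pi.add_apply, Pi.smul_apply,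
        smul_eq_mul] <;> field_simp <;> ring

end Matrix

theorem block_matrix_eigenvalue_iff_general (n : ℕ) (B : Matrix (Fin n) (Fin n) ℂ)
    (TE TI : ℝ) (hTE : 0 < TE) (μ : ℂ) :
    μ ∈ spectrum ℂ
      (Matrix.fromBlocks
        ((-(1 / (TE : ℂ))) • (1 : Matrix (Fin n) (Fin n) ℂ)) B
        ((1 / (TE : ℂ)) • (1 : Matrix (Fin n) (Fin n) ℂ))
        ((-(1 / (TI : ℂ))) • (1 : Matrix (Fin n) (Fin n) ℂ))) ↔
    (TE : ℂ) * (μ + 1 / (TE : ℂ)) * (μ + 1 / (TI : ℂ)) ∈ spectrum ℂ B := by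
  have hTE' : (TE : ℂ) ≠ 0 := by exact_mod_cast hTE.ne'
  rw [Matrix.mem_spectrum_fromBlocks_smul_one_iff _ _ _ (one_div_ne_zero hTE')]
  congr! 1
  field_simp
  ring

/-- Let `B` be an `n × n` complex matrix, `T_E, T_I > 0`, and let `A` be the `2n × 2n`
block matrix `A = [[−(1/T_E) I, B], [(1/T_E) I, −(1/T_I) I]]`.  Then a complex number
`μ` is an eigenvalue of `A` if and only if `T_E (μ + 1/T_E)(μ + 1/T_I)` is an
eigenvalue of `B`. -/
theorem block_matrix_eigenvalue_iff (n : ℕ) (B : Matrix (Fin n) (Fin n) ℂ)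
    (TE TI : ℝ) (hTE : 0 < TE) (hTI : 0 < TI) (μ : ℂ) :
    μ ∈ spectrum ℂ
      (Matrix.fromBlocks
        ((-(1 / (TE : ℂ))) • (1 : Matrix (Fin n) (Fin n) ℂ)) B
        ((1 / (TE : ℂ)) • (1 : Matrix (Fin n) (Fin n) ℂ))
        ((-(1 / (TI : ℂ))) • (1 : Matrix (Fin n) (Fin n) ℂ))) ↔
    (TE : ℂ) * (μ + 1 / (TE : ℂ)) * (μ + 1 / (TI : ℂ)) ∈ spectrum ℂ B :=
  block_matrix_eigenvalue_iff_general n B TE TI hTE μ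
end

section
/- Supercritical instability of the linearized infectious subsystem: let B be an n × n real matrix and T_E, T_I > 0. If B has a real eigenvalue λ with λ T_I > 1, then the block matrix A = [[−(1/T_E) I_n, B], [(1/T_E) I_n, −(1/T_I) I_n]] has a real eigenvalue μ > 0. -/
/-!
If `B v = λ v`, then `((μ + 1/T_I) v, (1/T_E) v)` is an eigenvector of the block matrix with
eigenvalue `μ` as soon as `(μ + 1/T_E)(μ + 1/T_I) = λ/T_E`. At `μ = 0` the left side is
`1/(T_E T_I) < λ/T_E` and it tends to infinity, so the intermediate value theorem gives a
positive root.
-/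

open Matrix Module End

theorem Matrix.mem_spectrum_iff_exists_mulVec_eq_smul_s10 {K n : Type*} [Field K] [Fintype n]
    [DecidableEq n] {A : Matrix n n K} {μ : K} :
    μ ∈ spectrum K A ↔ ∃ v ≠ 0, A *ᵥ v = μ • v := by
  rw [← spectrum_toLin', ← hasEigenvalue_iff_mem_spectrum]
  constructor
  · intro h
    obtain ⟨v, hv⟩ := h.exists_hasEigenvector
    exact ⟨v, hv.2, by simpa using hv.apply_eq_smul⟩
  · rintro ⟨v, hv0, hv⟩
    exact hasEigenvalue_of_hasEigenvector ⟨mem_eigenspace_iff.mpr (by simpa using hv), hv0⟩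

theorem exists_pos_add_mul_add_eq {α β γ : ℝ} (h : α * β < γ) :
    ∃ μ > 0, (μ + α) * (μ + β) = γ := by
  set M := |α| + |β| + |γ| + 1
  have hM : 0 ≤ M := by positivity
  have hαM : |γ| + 1 ≤ M + α := by linarith [neg_abs_le α, abs_nonneg β]
  have hβM : |γ| + 1 ≤ M + β := by linarith [neg_abs_le β, abs_nonneg α]
  have hfM : γ < (M + α) * (M + β) := by
    nlinarith [le_abs_self γ, abs_nonneg γ]
  have hcont : ContinuousOn (fun μ : ℝ => (μ + α) * (μ + β)) (Set.Icc 0 M) := by fun_prop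
  obtain ⟨μ, hμ, hμγ⟩ := intermediate_value_Ioo hM hcont ⟨by simpa using h, hfM⟩
  exact ⟨μ, hμ.1, hμγ⟩

theorem Matrix.mem_spectrum_fromBlocks_smul_one {K n : Type*} [Field K] [Fintype n]
    [DecidableEq n] {B : Matrix n n K} {lam μ a c d : K} (hlam : lam ∈ spectrum K B)
    (hc : c ≠ 0) (hμ : (μ - a) * (μ - d) = c * lam) :
    μ ∈ spectrum K (fromBlocks (a • (1 : Matrix n n K)) B (c • (1 : Matrix n n K)) (d • 1)) := by
  obtain ⟨v, hv0, hBv⟩ := mem_spectrum_iff_exists_mulVec_eq_smul_s10.mp hlam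
  rw [mem_spectrum_iff_exists_mulVec_eq_smul_s10]
  refine ⟨Sum.elim ((μ - d) • v) (c • v), fun h => smul_ne_zero hc hv0 ?_, ?_⟩
  · exact funext fun i => congrFun h (Sum.inr i)
  ext (i | i)
  · simp only [fromBlocks_mulVec, Sum.elim_comp_inl, mulVec_smul, smul_mulVec, one_mulVec,
      Sum.elim_comp_inr, hBv, Sum.elim_inl, Pi.add_apply, Pi.smul_apply, smul_eq_mul]
    linear_combination -(v i) * hμ
  · simp only [fromBlocks_mulVec, Sum.elim_comp_inl, smul_mulVec, one_mulVec, Sum.elim_comp_inr,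
      Sum.elim_inr, Pi.add_apply, Pi.smul_apply, smul_eq_mul]
    ring

/-- Supercritical instability of the linearized infectious subsystem: let `B` be an
`n × n` real matrix and `T_E, T_I > 0`.  If `B` has a real eigenvalue `λ` with
`λ T_I > 1`, then the block matrix `A = [[−(1/T_E) I, B], [(1/T_E) I, −(1/T_I) I]]`
has a real eigenvalue `μ > 0`. -/
theorem block_matrix_supercritical_instability (n : ℕ) (B : Matrix (Fin n) (Fin n) ℝ)
    (TE TI : ℝ) (hTE : 0 < TE) (hTI : 0 < TI)
    (lam : ℝ) (hlam : lam ∈ spectrum ℝ B) (hsup : 1 < lam * TI) :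
    ∃ μ : ℝ, 0 < μ ∧ μ ∈ spectrum ℝ
      (Matrix.fromBlocks
        ((-(1 / TE)) • (1 : Matrix (Fin n) (Fin n) ℝ)) B
        ((1 / TE) • (1 : Matrix (Fin n) (Fin n) ℝ))
        ((-(1 / TI)) • (1 : Matrix (Fin n) (Fin n) ℝ))) := by
  have hsub : 1 / TE * (1 / TI) < lam / TE :=
    calc 1 / TE * (1 / TI) = 1 / TI / TE := by ring
      _ < lam / TE := div_lt_div_of_pos_right ((div_lt_iff₀ hTI).2 hsup) hTE
  obtain ⟨μ, hμ, hroot⟩ := exists_pos_add_mul_add_eq hsub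
  refine ⟨μ, hμ, mem_spectrum_fromBlocks_smul_one hlam (one_div_ne_zero hTE.ne') ?_⟩
  linear_combination hroot
end

section
/- Nonnegativity invariance of the epidemic model: assume in addition that λ_{kg}(t) ≥ 0 and v_{kg}(t) ≥ 0 for all t ≥ 0 and all (k,g). If a solution of the epidemic model on [0, ∞) has all 16 compartment values nonnegative at t = 0 for every stratum (k,g), then all compartment values remain nonnegative for all t ≥ 0 and all (k,g). -/
/-!
Every compartment obeys an equation `f' = p - c f` with outflow rate `c ≥ 0` and an inflow `p`
that is nonnegative as soon as the compartments feeding it are. Such an `f` cannot leave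
`[0, ∞)`: after the last time `s ≤ t` with `f s ≥ 0`, `f` is negative, so `f' = p - c f ≥ 0`
and `f t ≥ f s ≥ 0`. Following the flow of the model (susceptible and vaccinated, then infected,
then quarantined, hospitalised and removed), the compartments are nonnegative one by one.
-/

open Set

section
variable {a : ℝ}

theorem nonneg_of_hasDerivAt_nonneg_of_neg {f f' : ℝ → ℝ}
    (hf : ∀ t ∈ Ici a, HasDerivAt f (f' t) t) (hf' : ∀ t ∈ Ici a, f t < 0 → 0 ≤ f' t)
    (ha : 0 ≤ f a) : ∀ t ∈ Ici a, 0 ≤ f t := by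
  intro t ht
  by_contra! hft
  have hcont : ContinuousOn f (Icc a t) := fun s hs ↦
    (hf s hs.1).continuousAt.continuousWithinAt
  obtain ⟨s, ⟨⟨has, hst⟩, hfs⟩, hs_max⟩ : ∃ s, IsGreatest (Icc a t ∩ f ⁻¹' Ici 0) s :=
    (isCompact_Icc.of_isClosed_subset
      (hcont.preimage_isClosed_of_isClosed isClosed_Icc isClosed_Ici)
      inter_subset_left).exists_isGreatest ⟨a, left_mem_Icc.2 ht, ha⟩
  have hneg : ∀ u ∈ Ioc s t, f u < 0 := fun u hu ↦
    not_le.1 fun h ↦ hu.1.not_ge (hs_max ⟨⟨has.trans hu.1.le, hu.2⟩, h⟩)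
  have hmono : MonotoneOn f (Icc s t) := by
    refine monotoneOn_of_hasDerivWithinAt_nonneg (f' := f') (convex_Icc s t)
      (hcont.mono (Icc_subset_Icc_left has)) (fun u hu ↦ ?_) (fun u hu ↦ ?_) <;>
      rw [interior_Icc] at hu
    · exact (hf u (has.trans hu.1.le)).hasDerivWithinAt
    · exact hf' u (has.trans hu.1.le) (hneg u (Ioo_subset_Ioc_self hu))
  exact hft.not_ge (hfs.trans (hmono ⟨le_rfl, hst⟩ ⟨hst, le_rfl⟩ hst))

theorem nonneg_of_hasDerivAt_sub_mul {f p c : ℝ → ℝ}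
    (hf : ∀ t ∈ Ici a, HasDerivAt f (p t - c t * f t) t)
    (hp : ∀ t ∈ Ici a, 0 ≤ p t) (hc : ∀ t ∈ Ici a, 0 ≤ c t) (ha : 0 ≤ f a) :
    ∀ t ∈ Ici a, 0 ≤ f t :=
  nonneg_of_hasDerivAt_nonneg_of_neg hf (fun t ht hft ↦
    sub_nonneg.2 ((mul_nonpos_of_nonneg_of_nonpos (hc t ht) hft.le).trans (hp t ht))) ha

theorem susceptible_vaccinated_nonneg {lam vac Sx Su Sv Sp V : ℝ → ℝ} {TV e ω : ℝ}
    (hTV : 0 ≤ TV) (he : e ∈ Icc (0 : ℝ) 1) (hω : ω ≤ 1)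
    (hlam : ∀ t ∈ Ici a, 0 ≤ lam t) (hvac : ∀ t ∈ Ici a, 0 ≤ vac t)
    (hSx : ∀ t ∈ Ici a, HasDerivAt Sx (-(lam t * Sx t)) t)
    (hSu : ∀ t ∈ Ici a, HasDerivAt Su (-(lam t * Su t) - vac t * Su t) t)
    (hSv : ∀ t ∈ Ici a, HasDerivAt Sv (vac t * Su t - lam t * Sv t - Sv t / TV) t)
    (hSp : ∀ t ∈ Ici a, HasDerivAt Sp ((1 - e) * Sv t / TV - (1 - ω) * lam t * Sp t) t)
    (hV : ∀ t ∈ Ici a, HasDerivAt V (e * Sv t / TV) t)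
    (h0 : 0 ≤ Sx a ∧ 0 ≤ Su a ∧ 0 ≤ Sv a ∧ 0 ≤ Sp a ∧ 0 ≤ V a) :
    ∀ t ∈ Ici a, (0 ≤ Sx t ∧ 0 ≤ Su t ∧ 0 ≤ Sv t ∧ 0 ≤ Sp t) ∧ 0 ≤ V t := by
  obtain ⟨hSx0, hSu0, hSv0, hSp0, hV0⟩ := h0
  have hSx_nn := nonneg_of_hasDerivAt_sub_mul (p := fun _ ↦ 0) (c := lam)
    (fun t ht ↦ (hSx t ht).congr_deriv (by ring)) (fun _ _ ↦ le_rfl) hlam hSx0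
  have hSu_nn := nonneg_of_hasDerivAt_sub_mul (p := fun _ ↦ 0) (c := fun t ↦ lam t + vac t)
    (fun t ht ↦ (hSu t ht).congr_deriv (by ring)) (fun _ _ ↦ le_rfl)
    (fun t ht ↦ add_nonneg (hlam t ht) (hvac t ht)) hSu0
  have hSv_nn := nonneg_of_hasDerivAt_sub_mul (p := fun t ↦ vac t * Su t)
    (c := fun t ↦ lam t + TV⁻¹) (fun t ht ↦ (hSv t ht).congr_deriv (by ring))
    (fun t ht ↦ mul_nonneg (hvac t ht) (hSu_nn t ht))
    (fun t ht ↦ add_nonneg (hlam t ht) (inv_nonneg.2 hTV)) hSv0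
  have hSp_nn := nonneg_of_hasDerivAt_sub_mul (p := fun t ↦ (1 - e) * Sv t / TV)
    (c := fun t ↦ (1 - ω) * lam t) hSp
    (fun t ht ↦ div_nonneg (mul_nonneg (sub_nonneg.2 he.2) (hSv_nn t ht)) hTV)
    (fun t ht ↦ mul_nonneg (sub_nonneg.2 hω) (hlam t ht)) hSp0
  have hV_nn := nonneg_of_hasDerivAt_nonneg_of_neg hV
    (fun t ht _ ↦ div_nonneg (mul_nonneg he.1 (hSv_nn t ht)) hTV) hV0
  exact fun t ht ↦ ⟨⟨hSx_nn t ht, hSu_nn t ht, hSv_nn t ht, hSp_nn t ht⟩, hV_nn t ht⟩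

theorem infected_nonneg {lam Sx Su Sv Sp E Ev I Iv : ℝ → ℝ} {TE TI ω : ℝ}
    (hTE : 0 ≤ TE) (hTI : 0 ≤ TI) (hω : ω ≤ 1) (hlam : ∀ t ∈ Ici a, 0 ≤ lam t)
    (hS : ∀ t ∈ Ici a, 0 ≤ Sx t ∧ 0 ≤ Su t ∧ 0 ≤ Sv t ∧ 0 ≤ Sp t)
    (hE : ∀ t ∈ Ici a, HasDerivAt E (lam t * (Sx t + Su t + Sv t) - E t / TE) t)
    (hEv : ∀ t ∈ Ici a, HasDerivAt Ev ((1 - ω) * lam t * Sp t - Ev t / TE) t)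
    (hI : ∀ t ∈ Ici a, HasDerivAt I (E t / TE - I t / TI) t)
    (hIv : ∀ t ∈ Ici a, HasDerivAt Iv (Ev t / TE - Iv t / TI) t)
    (h0 : 0 ≤ E a ∧ 0 ≤ Ev a ∧ 0 ≤ I a ∧ 0 ≤ Iv a) :
    ∀ t ∈ Ici a, 0 ≤ E t ∧ 0 ≤ Ev t ∧ 0 ≤ I t ∧ 0 ≤ Iv t := by
  obtain ⟨hE0, hEv0, hI0, hIv0⟩ := h0
  have hE_nn := nonneg_of_hasDerivAt_sub_mul (p := fun t ↦ lam t * (Sx t + Su t + Sv t))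
    (c := fun _ ↦ TE⁻¹) (fun t ht ↦ (hE t ht).congr_deriv (by ring))
    (fun t ht ↦ by obtain ⟨hSx, hSu, hSv, -⟩ := hS t ht; have := hlam t ht; positivity)
    (fun _ _ ↦ inv_nonneg.2 hTE) hE0
  have hEv_nn := nonneg_of_hasDerivAt_sub_mul (p := fun t ↦ (1 - ω) * lam t * Sp t)
    (c := fun _ ↦ TE⁻¹) (fun t ht ↦ (hEv t ht).congr_deriv (by ring))
    (fun t ht ↦ mul_nonneg (mul_nonneg (sub_nonneg.2 hω) (hlam t ht)) (hS t ht).2.2.2)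
    (fun _ _ ↦ inv_nonneg.2 hTE) hEv0
  have hI_nn := nonneg_of_hasDerivAt_sub_mul (p := fun t ↦ E t / TE)
    (c := fun _ ↦ TI⁻¹) (fun t ht ↦ (hI t ht).congr_deriv (by ring))
    (fun t ht ↦ div_nonneg (hE_nn t ht) hTE) (fun _ _ ↦ inv_nonneg.2 hTI) hI0
  have hIv_nn := nonneg_of_hasDerivAt_sub_mul (p := fun t ↦ Ev t / TE)
    (c := fun _ ↦ TI⁻¹) (fun t ht ↦ (hIv t ht).congr_deriv (by ring))
    (fun t ht ↦ div_nonneg (hEv_nn t ht) hTE) (fun _ _ ↦ inv_nonneg.2 hTI) hIv0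
  exact fun t ht ↦ ⟨hE_nn t ht, hEv_nn t ht, hI_nn t ht, hIv_nn t ht⟩

theorem treated_nonneg {I Iv Q0 Q1 Hw Hc Hr R D : ℝ → ℝ}
    {TI TQ0 TQ1 THw THc THr π ph pc muq muw muc : ℝ}
    (hTI : 0 ≤ TI) (hTQ0 : 0 ≤ TQ0) (hTQ1 : 0 ≤ TQ1) (hTHw : 0 ≤ THw) (hTHc : 0 ≤ THc)
    (hTHr : 0 ≤ THr) (hπ : π ∈ Icc (0 : ℝ) 1) (hph : ph ∈ Icc (0 : ℝ) 1)
    (hpc : pc ∈ Icc (0 : ℝ) 1) (hmuq : muq ∈ Icc (0 : ℝ) 1) (hmuw : muw ∈ Icc (0 : ℝ) 1)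
    (hmuc : muc ∈ Icc (0 : ℝ) 1) (hI : ∀ t ∈ Ici a, 0 ≤ I t ∧ 0 ≤ Iv t)
    (hQ0 : ∀ t ∈ Ici a, HasDerivAt Q0
      ((1 - ph) * I t / TI + (1 - (1 - π) * ph) * Iv t / TI - Q0 t / TQ0) t)
    (hQ1 : ∀ t ∈ Ici a, HasDerivAt Q1 (ph * (I t + (1 - π) * Iv t) / TI - Q1 t / TQ1) t)
    (hHw : ∀ t ∈ Ici a, HasDerivAt Hw (Q1 t / TQ1 - Hw t / THw) t)
    (hHc : ∀ t ∈ Ici a, HasDerivAt Hc (pc * Hw t / THw - Hc t / THc) t)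
    (hHr : ∀ t ∈ Ici a, HasDerivAt Hr ((1 - muc) * Hc t / THc - Hr t / THr) t)
    (hR : ∀ t ∈ Ici a, HasDerivAt R
      ((1 - muq) * Q0 t / TQ0 + (1 - muw) * (1 - pc) * Hw t / THw + Hr t / THr) t)
    (hD : ∀ t ∈ Ici a, HasDerivAt D
      (muq * Q0 t / TQ0 + muw * (1 - pc) * Hw t / THw + muc * Hc t / THc) t)
    (h0 : 0 ≤ Q0 a ∧ 0 ≤ Q1 a ∧ 0 ≤ Hw a ∧ 0 ≤ Hc a ∧ 0 ≤ Hr a ∧ 0 ≤ R a ∧ 0 ≤ D a) :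
    ∀ t ∈ Ici a,
      0 ≤ Q0 t ∧ 0 ≤ Q1 t ∧ 0 ≤ Hw t ∧ 0 ≤ Hc t ∧ 0 ≤ Hr t ∧ 0 ≤ R t ∧ 0 ≤ D t := by
  obtain ⟨hQ00, hQ10, hHw0, hHc0, hHr0, hR0, hD0⟩ := h0
  have hph' : 0 ≤ 1 - (1 - π) * ph :=
    sub_nonneg.2 (mul_le_one₀ (by linarith [hπ.1]) hph.1 hph.2)
  have hQ0_nn := nonneg_of_hasDerivAt_sub_mul
    (p := fun t ↦ (1 - ph) * I t / TI + (1 - (1 - π) * ph) * Iv t / TI)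
    (c := fun _ ↦ TQ0⁻¹) (fun t ht ↦ (hQ0 t ht).congr_deriv (by ring))
    (fun t ht ↦ by obtain ⟨hIt, hIvt⟩ := hI t ht; have := sub_nonneg.2 hph.2; positivity)
    (fun _ _ ↦ inv_nonneg.2 hTQ0) hQ00
  have hQ1_nn := nonneg_of_hasDerivAt_sub_mul (p := fun t ↦ ph * (I t + (1 - π) * Iv t) / TI)
    (c := fun _ ↦ TQ1⁻¹) (fun t ht ↦ (hQ1 t ht).congr_deriv (by ring))
    (fun t ht ↦ by
      obtain ⟨hIt, hIvt⟩ := hI t ht; have := hph.1; have := sub_nonneg.2 hπ.2; positivity)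
    (fun _ _ ↦ inv_nonneg.2 hTQ1) hQ10
  have hHw_nn := nonneg_of_hasDerivAt_sub_mul (p := fun t ↦ Q1 t / TQ1)
    (c := fun _ ↦ THw⁻¹) (fun t ht ↦ (hHw t ht).congr_deriv (by ring))
    (fun t ht ↦ div_nonneg (hQ1_nn t ht) hTQ1) (fun _ _ ↦ inv_nonneg.2 hTHw) hHw0
  have hHc_nn := nonneg_of_hasDerivAt_sub_mul (p := fun t ↦ pc * Hw t / THw)
    (c := fun _ ↦ THc⁻¹) (fun t ht ↦ (hHc t ht).congr_deriv (by ring))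
    (fun t ht ↦ div_nonneg (mul_nonneg hpc.1 (hHw_nn t ht)) hTHw)
    (fun _ _ ↦ inv_nonneg.2 hTHc) hHc0
  have hHr_nn := nonneg_of_hasDerivAt_sub_mul (p := fun t ↦ (1 - muc) * Hc t / THc)
    (c := fun _ ↦ THr⁻¹) (fun t ht ↦ (hHr t ht).congr_deriv (by ring))
    (fun t ht ↦ div_nonneg (mul_nonneg (sub_nonneg.2 hmuc.2) (hHc_nn t ht)) hTHc)
    (fun _ _ ↦ inv_nonneg.2 hTHr) hHr0
  have hpc' := sub_nonneg.2 hpc.2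
  have hR_nn := nonneg_of_hasDerivAt_nonneg_of_neg hR (fun t ht _ ↦ by
    have := sub_nonneg.2 hmuq.2; have := sub_nonneg.2 hmuw.2
    have := hQ0_nn t ht; have := hHw_nn t ht; have := hHr_nn t ht
    positivity) hR0
  have hD_nn := nonneg_of_hasDerivAt_nonneg_of_neg hD (fun t ht _ ↦ by
    have := hmuq.1; have := hmuw.1; have := hmuc.1
    have := hQ0_nn t ht; have := hHw_nn t ht; have := hHc_nn t ht
    positivity) hD0
  exact fun t ht ↦ ⟨hQ0_nn t ht, hQ1_nn t ht, hHw_nn t ht, hHc_nn t ht, hHr_nn t ht,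
    hR_nn t ht, hD_nn t ht⟩

end

theorem epidemic_nonnegativity_invariance_general
    (J : Set ℝ) (hJ : J = Set.Ici (0 : ℝ))
    (K G : ℕ)
    (TE TI TQ0 TQ1 THw THc THr TV : ℝ)
    (hTE : 0 < TE) (hTI : 0 < TI) (hTQ0 : 0 < TQ0) (hTQ1 : 0 < TQ1)
    (hTHw : 0 < THw) (hTHc : 0 < THc) (hTHr : 0 < THr) (hTV : 0 < TV)
    (e ω π : ℝ)
    (he : e ∈ Set.Icc (0 : ℝ) 1) (hω : ω ∈ Set.Icc (0 : ℝ) 1) (hπ : π ∈ Set.Icc (0 : ℝ) 1)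
    (ph pc muq muw muc : Fin G → ℝ)
    (hph : ∀ g, ph g ∈ Set.Icc (0 : ℝ) 1) (hpc : ∀ g, pc g ∈ Set.Icc (0 : ℝ) 1)
    (hmuq : ∀ g, muq g ∈ Set.Icc (0 : ℝ) 1) (hmuw : ∀ g, muw g ∈ Set.Icc (0 : ℝ) 1)
    (hmuc : ∀ g, muc g ∈ Set.Icc (0 : ℝ) 1)
    (lam vac : Fin K → Fin G → ℝ → ℝ)
    (Sx Su Sv Sp E Ev I Iv Q0 Q1 Hw Hc Hr R D V : Fin K → Fin G → ℝ → ℝ)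
    (hSx : ∀ t ∈ J, ∀ k g, HasDerivAt (Sx k g) (-(lam k g t * Sx k g t)) t)
    (hSu : ∀ t ∈ J, ∀ k g, HasDerivAt (Su k g)
      (-(lam k g t * Su k g t) - vac k g t * Su k g t) t)
    (hSv : ∀ t ∈ J, ∀ k g, HasDerivAt (Sv k g)
      (vac k g t * Su k g t - lam k g t * Sv k g t - Sv k g t / TV) t)
    (hSp : ∀ t ∈ J, ∀ k g, HasDerivAt (Sp k g)
      ((1 - e) * Sv k g t / TV - (1 - ω) * lam k g t * Sp k g t) t)
    (hE : ∀ t ∈ J, ∀ k g, HasDerivAt (E k g)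
      (lam k g t * (Sx k g t + Su k g t + Sv k g t) - E k g t / TE) t)
    (hEv : ∀ t ∈ J, ∀ k g, HasDerivAt (Ev k g)
      ((1 - ω) * lam k g t * Sp k g t - Ev k g t / TE) t)
    (hI : ∀ t ∈ J, ∀ k g, HasDerivAt (I k g) (E k g t / TE - I k g t / TI) t)
    (hIv : ∀ t ∈ J, ∀ k g, HasDerivAt (Iv k g) (Ev k g t / TE - Iv k g t / TI) t)
    (hQ0 : ∀ t ∈ J, ∀ k g, HasDerivAt (Q0 k g)
      ((1 - ph g) * I k g t / TI + (1 - (1 - π) * ph g) * Iv k g t / TI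
        - Q0 k g t / TQ0) t)
    (hQ1 : ∀ t ∈ J, ∀ k g, HasDerivAt (Q1 k g)
      (ph g * (I k g t + (1 - π) * Iv k g t) / TI - Q1 k g t / TQ1) t)
    (hHw : ∀ t ∈ J, ∀ k g, HasDerivAt (Hw k g) (Q1 k g t / TQ1 - Hw k g t / THw) t)
    (hHc : ∀ t ∈ J, ∀ k g, HasDerivAt (Hc k g)
      (pc g * Hw k g t / THw - Hc k g t / THc) t)
    (hHr : ∀ t ∈ J, ∀ k g, HasDerivAt (Hr k g)
      ((1 - muc g) * Hc k g t / THc - Hr k g t / THr) t)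
    (hR : ∀ t ∈ J, ∀ k g, HasDerivAt (R k g)
      ((1 - muq g) * Q0 k g t / TQ0 + (1 - muw g) * (1 - pc g) * Hw k g t / THw
        + Hr k g t / THr) t)
    (hD : ∀ t ∈ J, ∀ k g, HasDerivAt (D k g)
      (muq g * Q0 k g t / TQ0 + muw g * (1 - pc g) * Hw k g t / THw
        + muc g * Hc k g t / THc) t)
    (hV : ∀ t ∈ J, ∀ k g, HasDerivAt (V k g) (e * Sv k g t / TV) t)
    (hlam_nonneg : ∀ t ∈ J, ∀ k g, 0 ≤ lam k g t)
    (hvac_nonneg : ∀ t ∈ J, ∀ k g, 0 ≤ vac k g t)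
    (h0 : ∀ k g, 0 ≤ Sx k g 0 ∧ 0 ≤ Su k g 0 ∧ 0 ≤ Sv k g 0 ∧ 0 ≤ Sp k g 0
      ∧ 0 ≤ E k g 0 ∧ 0 ≤ Ev k g 0 ∧ 0 ≤ I k g 0 ∧ 0 ≤ Iv k g 0
      ∧ 0 ≤ Q0 k g 0 ∧ 0 ≤ Q1 k g 0 ∧ 0 ≤ Hw k g 0 ∧ 0 ≤ Hc k g 0
      ∧ 0 ≤ Hr k g 0 ∧ 0 ≤ R k g 0 ∧ 0 ≤ D k g 0 ∧ 0 ≤ V k g 0) :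
    ∀ t ∈ J, ∀ k g,
      0 ≤ Sx k g t ∧ 0 ≤ Su k g t ∧ 0 ≤ Sv k g t ∧ 0 ≤ Sp k g t
      ∧ 0 ≤ E k g t ∧ 0 ≤ Ev k g t ∧ 0 ≤ I k g t ∧ 0 ≤ Iv k g t
      ∧ 0 ≤ Q0 k g t ∧ 0 ≤ Q1 k g t ∧ 0 ≤ Hw k g t ∧ 0 ≤ Hc k g t
      ∧ 0 ≤ Hr k g t ∧ 0 ≤ R k g t ∧ 0 ≤ D k g t ∧ 0 ≤ V k g t := by
  subst hJ
  intro t ht k g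
  obtain ⟨hSx0, hSu0, hSv0, hSp0, hE0, hEv0, hI0, hIv0, hQ00, hQ10, hHw0, hHc0, hHr0, hR0,
    hD0, hV0⟩ := h0 k g
  have hSV := susceptible_vaccinated_nonneg hTV.le he hω.2 (hlam_nonneg · · k g)
    (hvac_nonneg · · k g) (hSx · · k g) (hSu · · k g) (hSv · · k g) (hSp · · k g) (hV · · k g)
    ⟨hSx0, hSu0, hSv0, hSp0, hV0⟩
  have hInf := infected_nonneg hTE.le hTI.le hω.2 (hlam_nonneg · · k g) (fun s hs ↦ (hSV s hs).1)
    (hE · · k g) (hEv · · k g) (hI · · k g) (hIv · · k g) ⟨hE0, hEv0, hI0, hIv0⟩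
  have hTr := treated_nonneg hTI.le hTQ0.le hTQ1.le hTHw.le hTHc.le hTHr.le hπ (hph g) (hpc g)
    (hmuq g) (hmuw g) (hmuc g) (fun s hs ↦ (hInf s hs).2.2) (hQ0 · · k g) (hQ1 · · k g)
    (hHw · · k g) (hHc · · k g) (hHr · · k g) (hR · · k g) (hD · · k g)
    ⟨hQ00, hQ10, hHw0, hHc0, hHr0, hR0, hD0⟩
  obtain ⟨⟨hSxt, hSut, hSvt, hSpt⟩, hVt⟩ := hSV t ht
  obtain ⟨hEt, hEvt, hIt, hIvt⟩ := hInf t ht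
  obtain ⟨hQ0t, hQ1t, hHwt, hHct, hHrt, hRt, hDt⟩ := hTr t ht
  exact ⟨hSxt, hSut, hSvt, hSpt, hEt, hEvt, hIt, hIvt, hQ0t, hQ1t, hHwt, hHct, hHrt, hRt, hDt, hVt⟩

/-- Nonnegativity invariance of the epidemic model: if the forces of infection and
vaccination rates are nonnegative on `[0, ∞)` and a solution of the epidemic model on
`[0, ∞)` has all 16 compartment values nonnegative at `t = 0` for every stratum, then
all compartment values remain nonnegative for all `t ≥ 0` and all strata. -/
theorem epidemic_nonnegativity_invariance
    (J : Set ℝ) (hJ : J = Set.Ici (0 : ℝ))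
    (K G : ℕ) (hK : 0 < K) (hG : 0 < G)
    (TE TI TQ0 TQ1 THw THc THr TV : ℝ)
    (hTE : 0 < TE) (hTI : 0 < TI) (hTQ0 : 0 < TQ0) (hTQ1 : 0 < TQ1)
    (hTHw : 0 < THw) (hTHc : 0 < THc) (hTHr : 0 < THr) (hTV : 0 < TV)
    (e ω π : ℝ)
    (he : e ∈ Set.Icc (0 : ℝ) 1) (hω : ω ∈ Set.Icc (0 : ℝ) 1) (hπ : π ∈ Set.Icc (0 : ℝ) 1)
    (ph pc muq muw muc : Fin G → ℝ)
    (hph : ∀ g, ph g ∈ Set.Icc (0 : ℝ) 1) (hpc : ∀ g, pc g ∈ Set.Icc (0 : ℝ) 1)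
    (hmuq : ∀ g, muq g ∈ Set.Icc (0 : ℝ) 1) (hmuw : ∀ g, muw g ∈ Set.Icc (0 : ℝ) 1)
    (hmuc : ∀ g, muc g ∈ Set.Icc (0 : ℝ) 1)
    (lam vac : Fin K → Fin G → ℝ → ℝ)
    (hlam_cont : ∀ k g, Continuous (lam k g)) (hvac_cont : ∀ k g, Continuous (vac k g))
    (Sx Su Sv Sp E Ev I Iv Q0 Q1 Hw Hc Hr R D V : Fin K → Fin G → ℝ → ℝ)
    (hSx : ∀ t ∈ J, ∀ k g, HasDerivAt (Sx k g) (-(lam k g t * Sx k g t)) t)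
    (hSu : ∀ t ∈ J, ∀ k g, HasDerivAt (Su k g)
      (-(lam k g t * Su k g t) - vac k g t * Su k g t) t)
    (hSv : ∀ t ∈ J, ∀ k g, HasDerivAt (Sv k g)
      (vac k g t * Su k g t - lam k g t * Sv k g t - Sv k g t / TV) t)
    (hSp : ∀ t ∈ J, ∀ k g, HasDerivAt (Sp k g)
      ((1 - e) * Sv k g t / TV - (1 - ω) * lam k g t * Sp k g t) t)
    (hE : ∀ t ∈ J, ∀ k g, HasDerivAt (E k g)
      (lam k g t * (Sx k g t + Su k g t + Sv k g t) - E k g t / TE) t)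
    (hEv : ∀ t ∈ J, ∀ k g, HasDerivAt (Ev k g)
      ((1 - ω) * lam k g t * Sp k g t - Ev k g t / TE) t)
    (hI : ∀ t ∈ J, ∀ k g, HasDerivAt (I k g) (E k g t / TE - I k g t / TI) t)
    (hIv : ∀ t ∈ J, ∀ k g, HasDerivAt (Iv k g) (Ev k g t / TE - Iv k g t / TI) t)
    (hQ0 : ∀ t ∈ J, ∀ k g, HasDerivAt (Q0 k g)
      ((1 - ph g) * I k g t / TI + (1 - (1 - π) * ph g) * Iv k g t / TI
        - Q0 k g t / TQ0) t)
    (hQ1 : ∀ t ∈ J, ∀ k g, HasDerivAt (Q1 k g)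
      (ph g * (I k g t + (1 - π) * Iv k g t) / TI - Q1 k g t / TQ1) t)
    (hHw : ∀ t ∈ J, ∀ k g, HasDerivAt (Hw k g) (Q1 k g t / TQ1 - Hw k g t / THw) t)
    (hHc : ∀ t ∈ J, ∀ k g, HasDerivAt (Hc k g)
      (pc g * Hw k g t / THw - Hc k g t / THc) t)
    (hHr : ∀ t ∈ J, ∀ k g, HasDerivAt (Hr k g)
      ((1 - muc g) * Hc k g t / THc - Hr k g t / THr) t)
    (hR : ∀ t ∈ J, ∀ k g, HasDerivAt (R k g)
      ((1 - muq g) * Q0 k g t / TQ0 + (1 - muw g) * (1 - pc g) * Hw k g t / THw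
        + Hr k g t / THr) t)
    (hD : ∀ t ∈ J, ∀ k g, HasDerivAt (D k g)
      (muq g * Q0 k g t / TQ0 + muw g * (1 - pc g) * Hw k g t / THw
        + muc g * Hc k g t / THc) t)
    (hV : ∀ t ∈ J, ∀ k g, HasDerivAt (V k g) (e * Sv k g t / TV) t)
    (hlam_nonneg : ∀ t ∈ J, ∀ k g, 0 ≤ lam k g t)
    (hvac_nonneg : ∀ t ∈ J, ∀ k g, 0 ≤ vac k g t)
    (h0 : ∀ k g, 0 ≤ Sx k g 0 ∧ 0 ≤ Su k g 0 ∧ 0 ≤ Sv k g 0 ∧ 0 ≤ Sp k g 0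
      ∧ 0 ≤ E k g 0 ∧ 0 ≤ Ev k g 0 ∧ 0 ≤ I k g 0 ∧ 0 ≤ Iv k g 0
      ∧ 0 ≤ Q0 k g 0 ∧ 0 ≤ Q1 k g 0 ∧ 0 ≤ Hw k g 0 ∧ 0 ≤ Hc k g 0
      ∧ 0 ≤ Hr k g 0 ∧ 0 ≤ R k g 0 ∧ 0 ≤ D k g 0 ∧ 0 ≤ V k g 0) :
    ∀ t ∈ J, ∀ k g,
      0 ≤ Sx k g t ∧ 0 ≤ Su k g t ∧ 0 ≤ Sv k g t ∧ 0 ≤ Sp k g t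
      ∧ 0 ≤ E k g t ∧ 0 ≤ Ev k g t ∧ 0 ≤ I k g t ∧ 0 ≤ Iv k g t
      ∧ 0 ≤ Q0 k g t ∧ 0 ≤ Q1 k g t ∧ 0 ≤ Hw k g t ∧ 0 ≤ Hc k g t
      ∧ 0 ≤ Hr k g t ∧ 0 ≤ R k g t ∧ 0 ≤ D k g t ∧ 0 ≤ V k g t :=
  epidemic_nonnegativity_invariance_general J hJ K G TE TI TQ0 TQ1 THw THc THr TV hTE hTI hTQ0 hTQ1
    hTHw hTHc hTHr hTV e ω π he hω hπ ph pc muq muw muc hph hpc hmuq hmuw hmuc lam vac Sx Su Sv Sp E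
    Ev I Iv Q0 Q1 Hw Hc Hr R D V hSx hSu hSv hSp hE hEv hI hIv hQ0 hQ1 hHw hHc hHr hR hD hV
    hlam_nonneg hvac_nonneg h0
end
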